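/- arXiv:1909.08121 — 2 statements merged into one kernel-verified Lean document; each statement's English description precedes it below -/
import Mathlib

section
/- For every λ ∈ (−1/2, 0) ∪ (0, ∞), every integer n ≥ 1 and every real x, (n/(2λ))²·[C_n^{(λ)}(x)]² + (1−x²)·[C_{n−1}^{(λ+1)}(x)]² = Σ_{k=0}^{n−1} ((λ+k)/λ)·[C_k^{(λ)}(x)]². -/
open Real MeasureTheory Finset

/-- Gegenbauer polynomials `C_n^{(λ)}`: `C_0 = 1`, `C_1 = 2λx`, and
`n C_n(x) = 2(n+λ-1) x C_{n-1}(x) - (n+2λ-2) C_{n-2}(x)` for `n ≥ 2`. -/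
noncomputable def gegenbauer (lam : ℝ) : ℕ → ℝ → ℝ
  | 0, _ => 1
  | 1, x => 2 * lam * x
  | n + 2, x =>
      (2 * ((n : ℝ) + 1 + lam) * x * gegenbauer lam (n + 1) x
        - ((n : ℝ) + 2 * lam) * gegenbauer lam n x) / ((n : ℝ) + 2)

lemma geg_rec (lam : ℝ) (m : ℕ) (x : ℝ) :
    ((m : ℝ) + 2) * gegenbauer lam (m + 2) x =
      2 * ((m : ℝ) + 1 + lam) * x * gegenbauer lam (m + 1) x
        - ((m : ℝ) + 2 * lam) * gegenbauer lam m x := by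
  have h2 : ((m : ℝ) + 2) ≠ 0 := by positivity
  rw [show gegenbauer lam (m+2) x = (2 * ((m : ℝ) + 1 + lam) * x * gegenbauer lam (m + 1) x
        - ((m : ℝ) + 2 * lam) * gegenbauer lam m x) / ((m : ℝ) + 2) from rfl]
  field_simp

/-- A(m) and B(m) simultaneously. -/
lemma gegAB (lam x : ℝ) : ∀ m : ℕ,
    (2*lam * gegenbauer (lam+1) (m+1) x
      = 2*lam*x * gegenbauer (lam+1) m x + ((m:ℝ)+1+2*lam) * gegenbauer lam (m+1) x)
    ∧ (2*lam*(1-x^2) * gegenbauer (lam+1) m x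
      = ((m:ℝ)+2*lam) * gegenbauer lam m x - ((m:ℝ)+1)*x * gegenbauer lam (m+1) x) := by
  intro m
  induction m with
  | zero =>
    constructor <;> · simp [gegenbauer]; ring
  | succ m ih =>
    obtain ⟨ha, hb⟩ := ih
    have hG := geg_rec lam m x
    have hG' := geg_rec (lam+1) m x
    have h2 : ((m : ℝ) + 2) ≠ 0 := by positivity
    constructor
    · push_cast
      apply mul_left_cancel₀ h2
      linear_combination 2*lam*hG' - ((m:ℝ)+2+2*lam)*hG + ((m:ℝ)+2+2*lam)*x*ha - ((m:ℝ)+2+2*lam)*hb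
    · simp only [show m+1+1 = m+2 from rfl]
      push_cast
      linear_combination x*hG + (1-x^2)*ha + x*hb

lemma gegC (lam x : ℝ) (m : ℕ) :
    ((m:ℝ)+2) * gegenbauer lam (m+2) x
      = 2*lam*x * gegenbauer (lam+1) (m+1) x - 2*lam * gegenbauer (lam+1) m x := by
  obtain ⟨ha, hb⟩ := gegAB lam x m
  have hG := geg_rec lam m x
  linear_combination hG - x*ha + hb

lemma gegP (lam x : ℝ) (hl : lam ≠ 0) : ∀ m : ℕ,
    (((m:ℝ)+1) / (2*lam)) ^ 2 * (gegenbauer lam (m+1) x) ^ 2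
      + (1 - x^2) * (gegenbauer (lam+1) m x) ^ 2 =
    ∑ k ∈ Finset.range (m+1), ((lam + (k:ℝ)) / lam) * (gegenbauer lam k x) ^ 2 := by
  intro m
  induction m with
  | zero =>
    simp [gegenbauer]
    field_simp
    ring
  | succ m ih =>
    rw [Finset.sum_range_succ, ← ih]
    have ha := (gegAB lam x m).1
    have hc := gegC lam x m
    push_cast
    simp only [show m+1+1 = m+2 from rfl]
    field_simp
    linear_combination (1:ℝ) * ((((m:ℝ)+2) * gegenbauer lam (m+2) x
        + 2*lam*x * gegenbauer (lam+1) (m+1) x - 2*lam * gegenbauer (lam+1) m x) * hc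
      + (2*lam * gegenbauer (lam+1) (m+1) x - 2*lam*x * gegenbauer (lam+1) m x
        + ((m:ℝ)+1+2*lam) * gegenbauer lam (m+1) x) * ha)

theorem gegenbauer_dette_identity (lam : ℝ)
    (hlam : lam ∈ Set.Ioo (-(1/2) : ℝ) 0 ∪ Set.Ioi (0 : ℝ)) (n : ℕ) (hn : 1 ≤ n) (x : ℝ) :
    ((n : ℝ) / (2 * lam)) ^ 2 * (gegenbauer lam n x) ^ 2
      + (1 - x ^ 2) * (gegenbauer (lam + 1) (n - 1) x) ^ 2 =
    ∑ k ∈ Finset.range n, ((lam + (k : ℝ)) / lam) * (gegenbauer lam k x) ^ 2 := by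

  have hl : lam ≠ 0 := by
    rcases hlam with h | h
    · exact ne_of_lt h.2
    · exact ne_of_gt h
  obtain ⟨m, rfl⟩ := Nat.exists_eq_add_of_le hn
  have := gegP lam x hl m
  simpa [add_comm 1 m] using this
end

section
/- For every integer n ≥ 0, 2·‖C_n^{(1)}‖₂² = ψ(n + 3/2) + γ + log 4, where ψ is the digamma function and γ is the Euler–Mascheroni constant. -/
open Real MeasureTheory Finset

/-- The digamma function `ψ = Γ′/Γ`. -/
noncomputable def digamma (x : ℝ) : ℝ := deriv Real.Gamma x / Real.Gamma x


section Aux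
open Polynomial Polynomial.Chebyshev

lemma digamma_add_one {x : ℝ} (hx : 0 < x) : digamma (x + 1) = digamma x + 1 / x := by
  have hdiff : DifferentiableAt ℝ Real.Gamma x :=
    Real.differentiableAt_Gamma
      (fun m => (lt_of_le_of_lt (neg_nonpos.mpr (Nat.cast_nonneg m)) hx).ne')
  have h1 : HasDerivAt (fun y : ℝ => y * Real.Gamma y)
      (1 * Real.Gamma x + x * deriv Real.Gamma x) x :=
    (hasDerivAt_id x).mul hdiff.hasDerivAt
  have heq : (fun y : ℝ => Real.Gamma (y + 1)) =ᶠ[nhds x] fun y : ℝ => y * Real.Gamma y := by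
    filter_upwards [isOpen_Ioi.mem_nhds (Set.mem_Ioi.mpr hx)] with y hy
    exact Real.Gamma_add_one (ne_of_gt hy)
  have h2 : HasDerivAt (fun y : ℝ => Real.Gamma (y + 1))
      (1 * Real.Gamma x + x * deriv Real.Gamma x) x := h1.congr_of_eventuallyEq heq
  have hdiff1 : DifferentiableAt ℝ Real.Gamma (x + 1) :=
    Real.differentiableAt_Gamma
      (fun m => (lt_of_le_of_lt (neg_nonpos.mpr (Nat.cast_nonneg m)) (by linarith)).ne')
  have h3 : HasDerivAt (fun y : ℝ => Real.Gamma (y + 1)) (deriv Real.Gamma (x + 1)) x := by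
    simpa [Function.comp_def] using (hdiff1.hasDerivAt.comp x ((hasDerivAt_id x).add_const 1))
  have hd : deriv Real.Gamma (x + 1) = Real.Gamma x + x * deriv Real.Gamma x := by
    have := h3.unique h2; linarith
  have hΓ : Real.Gamma x ≠ 0 := (Real.Gamma_pos_of_pos hx).ne'
  rw [digamma, digamma, hd, Real.Gamma_add_one hx.ne']
  field_simp
  ring

lemma digamma_one_half : digamma (1 / 2) = -(Real.eulerMascheroniConstant + 2 * Real.log 2) := by
  rw [digamma, Real.hasDerivAt_Gamma_one_half.deriv, Real.Gamma_one_half_eq]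
  have : (Real.sqrt π) ≠ 0 := by positivity
  field_simp

lemma digamma_formula (n : ℕ) : digamma ((n : ℝ) + 3 / 2) =
    -(Real.eulerMascheroniConstant + 2 * Real.log 2)
      + ∑ k ∈ range (n + 1), 2 / (2 * (k : ℝ) + 1) := by
  induction n with
  | zero =>
      have : ((0 : ℕ) : ℝ) + 3 / 2 = 1 / 2 + 1 := by norm_num
      rw [this, digamma_add_one (by norm_num), digamma_one_half]
      norm_num
  | succ n ih =>
      have : ((n + 1 : ℕ) : ℝ) + 3 / 2 = ((n : ℝ) + 3 / 2) + 1 := by push_cast; ring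
      rw [this, digamma_add_one (by positivity), ih, Finset.sum_range_succ _ (n + 1)]
      push_cast
      have h1 : ((n : ℝ) + 3 / 2) ≠ 0 := by positivity
      have h2 : (2 : ℝ) * ((n : ℝ) + 1) + 1 ≠ 0 := by positivity
      field_simp
      ring

lemma gegenbauer_one_eq (n : ℕ) (x : ℝ) : gegenbauer 1 n x = (U ℝ n).eval x := by
  induction n using Nat.twoStepInduction with
  | zero => simp [gegenbauer, U_zero]
  | one => simp [gegenbauer, U_one]
  | more n ih ih1 =>
      have hn : ((n : ℝ) + 2) ≠ 0 := by positivity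
      have : ((n : ℕ) + 2 : ℤ) = (n : ℤ) + 2 := by push_cast; ring
      rw [gegenbauer, show ((n + 2 : ℕ) : ℤ) = (n : ℤ) + 2 by push_cast; ring,
        U_add_two, ih, ih1]
      push_cast
      simp only [eval_sub, eval_mul, eval_ofNat, eval_X]
      field_simp
      ring

lemma U_addition (m : ℤ) (n : ℕ) :
    U ℝ (m + n) = U ℝ m * U ℝ n - U ℝ (m - 1) * U ℝ ((n : ℤ) - 1) := by
  induction n using Nat.twoStepInduction with
  | zero => simp [U_zero, U_neg_one]
  | one =>
      simp only [Nat.cast_one, U_one]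
      rw [U_add_one ℝ m, show (1 : ℤ) - 1 = 0 by ring, U_zero]
      ring
  | more n ih ih1 =>
      have c2 : ((n + 2 : ℕ) : ℤ) = (n : ℤ) + 2 := by push_cast; ring
      have c1 : ((n + 1 : ℕ) : ℤ) = (n : ℤ) + 1 := by push_cast; ring
      rw [c1, show (n : ℤ) + 1 - 1 = (n : ℤ) by ring] at ih1
      rw [c2, show (n : ℤ) + 2 - 1 = (n : ℤ) + 1 by ring,
        show m + ((n : ℤ) + 2) = (m + (n : ℤ)) + 2 by ring, U_add_two,
        show m + (n : ℤ) + 1 = m + ((n : ℤ) + 1) by ring, ih1, ih, U_add_two,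
        show (n : ℤ) + 1 = (n : ℤ) - 1 + 2 by ring, U_add_two,
        show (n : ℤ) - 1 + 1 = (n : ℤ) by ring]
      ring

lemma U_sq_sub_U_sq (n : ℕ) :
    U ℝ ((n : ℤ) + 1) ^ 2 - U ℝ (n : ℤ) ^ 2 = U ℝ (2 * (n : ℤ) + 2) := by
  have := U_addition ((n : ℤ) + 1) (n + 1)
  rw [show ((n : ℤ) + 1) + ((n + 1 : ℕ) : ℤ) = 2 * (n : ℤ) + 2 by push_cast; ring,
    show ((n : ℤ) + 1) - 1 = (n : ℤ) by ring,
    show ((n + 1 : ℕ) : ℤ) - 1 = (n : ℤ) by push_cast; ring,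
    show ((n + 1 : ℕ) : ℤ) = (n : ℤ) + 1 by push_cast; ring] at this
  rw [this]; ring

lemma T_eval_one (n : ℕ) : (T ℝ (n : ℤ)).eval 1 = 1 := by
  induction n using Nat.twoStepInduction with
  | zero => simp [T_zero]
  | one => simp [T_one]
  | more n ih ih1 =>
      rw [show ((n + 2 : ℕ) : ℤ) = (n : ℤ) + 2 by push_cast; ring, T_add_two]
      simp only [eval_sub, eval_mul, eval_ofNat, eval_X,
        show ((n + 1 : ℕ) : ℤ) = (n : ℤ) + 1 from by push_cast; ring] at *
      rw [ih1, ih]; ring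

lemma T_eval_zero_odd (n : ℕ) : (T ℝ (2 * (n : ℤ) + 1)).eval 0 = 0 := by
  induction n with
  | zero => simp [T_one]
  | succ n ih =>
      rw [show 2 * ((n + 1 : ℕ) : ℤ) + 1 = (2 * (n : ℤ) + 1) + 2 by push_cast; ring, T_add_two]
      simp [ih]

lemma integral_U_even (n : ℕ) :
    ∫ x in (0:ℝ)..1, (U ℝ (2 * (n : ℤ) + 2)).eval x = 1 / (2 * (n : ℝ) + 3) := by
  have hderiv : derivative (T ℝ (2 * (n : ℤ) + 3))
      = ((2 * (n : ℤ) + 3 : ℤ) : ℝ[X]) * U ℝ (2 * (n : ℤ) + 2) := by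
    have := T_derivative_eq_U (R := ℝ) (2 * (n : ℤ) + 3)
    rwa [show 2 * (n : ℤ) + 3 - 1 = 2 * (n : ℤ) + 2 by ring] at this
  have hne : (2 * (n : ℝ) + 3) ≠ 0 := by positivity
  have hint : ∫ x in (0:ℝ)..1, (derivative (T ℝ (2 * (n : ℤ) + 3))).eval x =
      (T ℝ (2 * (n : ℤ) + 3)).eval 1 - (T ℝ (2 * (n : ℤ) + 3)).eval 0 := by
    exact intervalIntegral.integral_eq_sub_of_hasDerivAt
      (f := fun x => (T ℝ (2 * (n : ℤ) + 3)).eval x)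
      (fun x _ => Polynomial.hasDerivAt _ x)
      ((Polynomial.continuous _).intervalIntegrable 0 1)
  rw [hderiv] at hint
  have hT1 : (T ℝ (2 * (n : ℤ) + 3)).eval 1 = 1 := by
    have := T_eval_one (2 * n + 3)
    rwa [show ((2 * n + 3 : ℕ) : ℤ) = 2 * (n : ℤ) + 3 by push_cast; ring] at this
  have hT0 : (T ℝ (2 * (n : ℤ) + 3)).eval 0 = 0 := by
    have := T_eval_zero_odd (n + 1)
    rwa [show 2 * ((n + 1 : ℕ) : ℤ) + 1 = 2 * (n : ℤ) + 3 by push_cast; ring] at this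
  rw [hT1, hT0] at hint
  simp only [eval_mul, eval_add, eval_mul, eval_ofNat, eval_intCast] at hint
  rw [intervalIntegral.integral_const_mul] at hint
  push_cast at hint
  rw [eq_div_iff hne]
  linarith [hint]

lemma integral_U_sq (n : ℕ) :
    ∫ x in (0:ℝ)..1, (U ℝ (n : ℤ)).eval x ^ 2 = ∑ k ∈ range (n + 1), 1 / (2 * (k : ℝ) + 1) := by
  induction n with
  | zero => simp [U_zero]
  | succ n ih =>
      have hint1 : IntervalIntegrable (fun x => (U ℝ ((n : ℤ) + 1)).eval x ^ 2)
          volume (0:ℝ) 1 := ((Polynomial.continuous _).pow 2).intervalIntegrable 0 1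
      have hint0 : IntervalIntegrable (fun x => (U ℝ (n : ℤ)).eval x ^ 2)
          volume (0:ℝ) 1 := ((Polynomial.continuous _).pow 2).intervalIntegrable 0 1
      have hpt : ∀ x : ℝ, (U ℝ ((n : ℤ) + 1)).eval x ^ 2 - (U ℝ (n : ℤ)).eval x ^ 2
          = (U ℝ (2 * (n : ℤ) + 2)).eval x := by
        intro x
        rw [← U_sq_sub_U_sq n]
        simp
      have key : (∫ x in (0:ℝ)..1, (U ℝ ((n : ℤ) + 1)).eval x ^ 2)
          - ∫ x in (0:ℝ)..1, (U ℝ (n : ℤ)).eval x ^ 2 = 1 / (2 * (n : ℝ) + 3) := by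
        rw [← intervalIntegral.integral_sub hint1 hint0, ← integral_U_even n]
        exact intervalIntegral.integral_congr (fun x _ => hpt x)
      rw [show ((n + 1 : ℕ) : ℤ) = (n : ℤ) + 1 by push_cast; ring,
        Finset.sum_range_succ _ (n + 1), ← ih]
      push_cast
      rw [show 2 * ((n : ℝ) + 1) + 1 = 2 * (n : ℝ) + 3 by ring]
      linarith [key]

lemma log_four : Real.log 4 = 2 * Real.log 2 := by
  rw [show (4 : ℝ) = 2 ^ 2 by norm_num, Real.log_pow]
  push_cast; ring

end Aux


theorem gegenbauer_one_L2_norm (n : ℕ) :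
    2 * (∫ x in (0:ℝ)..1, (gegenbauer 1 n x) ^ 2) =
      digamma ((n : ℝ) + 3/2) + Real.eulerMascheroniConstant + Real.log 4 := by
  simp only [gegenbauer_one_eq]
  rw [integral_U_sq, digamma_formula, log_four, Finset.mul_sum]
  simp only [mul_one_div]
  ring
end
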